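/- There is a universal constant c > 0 such that for every z ∈ ℂ with η := Im z > 0, every w ∈ ℂ with |w − z| ≤ η/100, and every t ≥ 0: (i) c^{−1}·Im√(w²−4) ≤ Im√(z²−4) ≤ c·Im√(w²−4); (ii) c^{−1}·Im(w_t) ≤ η_t ≤ c·Im(w_t); (iii) for every y ∈ ℂ with Im y ≤ 0, c^{−1}·|w_t − y| ≤ |z_t − y| ≤ c·|w_t − y|. Moreover, for every such z and every t ≥ 0, η_t·Im√(z_t²−4) ≥ e^{t}·η·Im√(z²−4). -/

import Mathlib

open MeasureTheory Real Filter Set Complex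

noncomputable section

/-- `√(z²−4) := √(z−2)·√(z+2)` with principal square roots (branch cut `[−2,2]`). -/
def sqrtD (z : ℂ) : ℂ := (z - 2) ^ ((1 : ℂ) / 2) * (z + 2) ^ ((1 : ℂ) / 2)

/-- The characteristic curve `z_t`. -/
def charC (z : ℂ) (t : ℝ) : ℂ :=
  ((Real.exp (t / 2) : ℂ) * (z + sqrtD z) + (Real.exp (-t / 2) : ℂ) * (z - sqrtD z)) / 2

/-!
For `Im z > 0` both factors of `√(z²−4) = √(z−2)·√(z+2)` lie in the open first quadrant. Since
`√v − √u = (v − u)/(√v + √u)` and `Im u = 2 Re √u Im √u`, moving `z` by at most `η/100` moves each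
factor by at most `1/50` of the smaller of its real and imaginary parts; expanding the product,
`√(w²−4)` then differs from `√(z²−4)` by at most `Im √(z²−4) / 20`. As
`z_t = cosh (t/2) z + sinh (t/2) √(z²−4)` has nonnegative coefficients, `|w_t − z_t| ≤ η_t / 20`,
and `η_t ≤ |z_t − y|` when `Im y ≤ 0`.

For the monotonicity, `√(z_t²−4) = sinh (t/2) z + cosh (t/2) √(z²−4)`, because both sides square
to `z_t² − 4` and lie in the upper half-plane; the product of the imaginary parts then exceeds
`e^t η Im √(z²−4)` by `cosh (t/2) sinh (t/2) (η − Im √(z²−4))²`.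
-/

namespace Complex

theorem sqrt_sq (u : ℂ) : u.sqrt ^ 2 = u := cpow_ofNat_inv_pow u 2

theorem re_sqrt_pos {u : ℂ} (hu : 0 < u.im) : 0 < u.sqrt.re := by
  have := abs_re_lt_norm.2 hu.ne'
  rw [Complex.sqrt, cpow_inv_two_re]
  exact Real.sqrt_pos.2 (by linarith [neg_abs_le u.re])

theorem im_sqrt_pos {u : ℂ} (hu : 0 < u.im) : 0 < u.sqrt.im := by
  have := abs_re_lt_norm.2 hu.ne'
  rw [Complex.sqrt, cpow_inv_two_im_eq_sqrt hu.le]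
  exact Real.sqrt_pos.2 (by linarith [le_abs_self u.re])

theorem two_mul_re_sqrt_mul_im_sqrt (u : ℂ) : 2 * u.sqrt.re * u.sqrt.im = u.im := by
  conv_rhs => rw [← sqrt_sq u]
  simp only [sq, mul_im]
  ring

theorem norm_le_norm_add_of_re_nonneg_of_im_nonneg {a b : ℂ} (ha₁ : 0 ≤ a.re) (ha₂ : 0 ≤ a.im)
    (hb₁ : 0 ≤ b.re) (hb₂ : 0 ≤ b.im) : ‖a‖ ≤ ‖a + b‖ := by
  rw [norm_def, norm_def]
  gcongr
  simp only [normSq_apply, add_re, add_im]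
  nlinarith

theorem norm_sqrt_sub_sqrt_le {u v : ℂ} {ε : ℝ} (hu : 0 < u.im) (hv : 0 < v.im)
    (h : ‖v - u‖ ≤ ε * u.im) : ‖v.sqrt - u.sqrt‖ ≤ 2 * ε * min u.sqrt.re u.sqrt.im := by
  set a := u.sqrt
  set b := v.sqrt
  have ha₁ := re_sqrt_pos hu
  have ha₂ := im_sqrt_pos hu
  have ha : 0 < ‖a‖ := ha₁.trans_le (re_le_norm a)
  have hab : ‖a‖ ≤ ‖a + b‖ := norm_le_norm_add_of_re_nonneg_of_im_nonneg ha₁.le ha₂.le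
    (re_sqrt_pos hv).le (im_sqrt_pos hv).le
  have hdiff : (b - a) * (a + b) = v - u := by
    linear_combination sqrt_sq v - sqrt_sq u
  have hmin : a.re * a.im ≤ min a.re a.im * ‖a‖ := by
    rw [min_mul_of_nonneg _ _ ha.le]
    exact le_min (mul_le_mul_of_nonneg_left (im_le_norm a) ha₁.le)
      (by rw [mul_comm]; exact mul_le_mul_of_nonneg_left (re_le_norm a) ha₂.le)
  have hε : 0 ≤ ε := by
    by_contra! hε
    nlinarith [norm_nonneg (v - u)]
  refine le_of_mul_le_mul_right ?_ ha
  calc ‖b - a‖ * ‖a‖ ≤ ‖b - a‖ * ‖a + b‖ := by gcongr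
    _ = ‖v - u‖ := by rw [← norm_mul, hdiff]
    _ ≤ ε * (2 * a.re * a.im) := by rwa [two_mul_re_sqrt_mul_im_sqrt]
    _ ≤ 2 * ε * min a.re a.im * ‖a‖ := by nlinarith

theorem norm_mul_sub_mul_le_mul_im {a b a' b' : ℂ} {ε : ℝ} (ha₁ : 0 ≤ a.re) (ha₂ : 0 ≤ a.im)
    (hb₁ : 0 ≤ b.re) (hb₂ : 0 ≤ b.im) (hε : 0 ≤ ε)
    (ha : ‖a' - a‖ ≤ ε * min a.re a.im) (hb : ‖b' - b‖ ≤ ε * min b.re b.im) :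
    ‖a' * b' - a * b‖ ≤ (2 * ε + ε ^ 2) * (a * b).im := by
  have norm_le {x : ℂ} (h₁ : 0 ≤ x.re) (h₂ : 0 ≤ x.im) : ‖x‖ ≤ x.re + x.im := by
    simpa [abs_of_nonneg h₁, abs_of_nonneg h₂] using norm_le_abs_re_add_abs_im x
  have hma := min_le_left a.re a.im
  have hma' := min_le_right a.re a.im
  have hmb := min_le_left b.re b.im
  have hmb' := min_le_right b.re b.im
  have hma₀ : 0 ≤ min a.re a.im := le_min ha₁ ha₂
  have hmb₀ : 0 ≤ min b.re b.im := le_min hb₁ hb₂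
  have h₁ : ‖(a' - a) * b‖ ≤ ε * (a * b).im := by
    rw [norm_mul, mul_im]
    calc ‖a' - a‖ * ‖b‖ ≤ ε * min a.re a.im * (b.re + b.im) :=
          mul_le_mul ha (norm_le hb₁ hb₂) (norm_nonneg _) (by positivity)
      _ ≤ ε * (a.re * b.im + a.im * b.re) := by
          rw [mul_assoc]; gcongr; nlinarith
  have h₂ : ‖a * (b' - b)‖ ≤ ε * (a * b).im := by
    rw [norm_mul, mul_im]
    calc ‖a‖ * ‖b' - b‖ ≤ (a.re + a.im) * (ε * min b.re b.im) :=
          mul_le_mul (norm_le ha₁ ha₂) hb (norm_nonneg _) (by positivity)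
      _ ≤ ε * (a.re * b.im + a.im * b.re) := by
          rw [mul_left_comm]; gcongr; nlinarith
  have h₃ : ‖(a' - a) * (b' - b)‖ ≤ ε ^ 2 * (a * b).im := by
    rw [norm_mul, mul_im]
    calc ‖a' - a‖ * ‖b' - b‖ ≤ ε * min a.re a.im * (ε * min b.re b.im) :=
          mul_le_mul ha hb (norm_nonneg _) (by positivity)
      _ ≤ ε ^ 2 * (a.re * b.im + a.im * b.re) := by
          rw [mul_mul_mul_comm, ← sq]; gcongr; nlinarith
  calc ‖a' * b' - a * b‖ = ‖(a' - a) * b + a * (b' - b) + (a' - a) * (b' - b)‖ := by ring_nf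
    _ ≤ ‖(a' - a) * b‖ + ‖a * (b' - b)‖ + ‖(a' - a) * (b' - b)‖ := norm_add₃_le
    _ ≤ (2 * ε + ε ^ 2) * (a * b).im := by linarith

end Complex

theorem sqrtD_eq_sqrt_mul_sqrt (z : ℂ) : sqrtD z = (z - 2).sqrt * (z + 2).sqrt := by
  simp only [sqrtD, Complex.sqrt, one_div]

theorem sqrtD_sq (z : ℂ) : sqrtD z ^ 2 = z ^ 2 - 4 := by
  rw [sqrtD_eq_sqrt_mul_sqrt, mul_pow, Complex.sqrt_sq, Complex.sqrt_sq]
  ring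

theorem im_sqrtD_pos {z : ℂ} (hz : 0 < z.im) : 0 < (sqrtD z).im := by
  have hm : 0 < (z - 2).im := by simpa using hz
  have hp : 0 < (z + 2).im := by simpa using hz
  have := re_sqrt_pos hm
  have := im_sqrt_pos hm
  have := re_sqrt_pos hp
  have := im_sqrt_pos hp
  rw [sqrtD_eq_sqrt_mul_sqrt, mul_im]
  positivity

theorem sqrtD_eq_of_sq_eq {z s : ℂ} (hz : 0 < z.im) (hs : s ^ 2 = z ^ 2 - 4) (hs₀ : 0 ≤ s.im) :
    sqrtD z = s := by
  have hsum : sqrtD z + s ≠ 0 := fun h ↦ by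
    have := congrArg im h
    simp only [add_im, zero_im] at this
    linarith [im_sqrtD_pos hz]
  have : (sqrtD z - s) * (sqrtD z + s) = 0 := by
    linear_combination sqrtD_sq z - hs
  exact sub_eq_zero.1 ((mul_eq_zero.1 this).resolve_right hsum)

theorem norm_sqrtD_sub_le {z w : ℂ} {ε : ℝ} (hz : 0 < z.im) (hε₀ : 0 ≤ ε) (hε₁ : ε < 1)
    (h : ‖w - z‖ ≤ ε * z.im) : ‖sqrtD w - sqrtD z‖ ≤ 4 * ε * (1 + ε) * (sqrtD z).im := by
  have hw : 0 < w.im := by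
    have := (abs_im_le_norm (w - z)).trans h
    rw [sub_im, abs_le] at this
    nlinarith
  have hm : ‖(w - 2) - (z - 2)‖ ≤ ε * (z - 2).im := by simpa using h
  have hp : ‖(w + 2) - (z + 2)‖ ≤ ε * (z + 2).im := by simpa using h
  have hzm : 0 < (z - 2).im := by simpa using hz
  have hzp : 0 < (z + 2).im := by simpa using hz
  rw [sqrtD_eq_sqrt_mul_sqrt, sqrtD_eq_sqrt_mul_sqrt]
  convert norm_mul_sub_mul_le_mul_im (re_sqrt_pos hzm).le (im_sqrt_pos hzm).le
    (re_sqrt_pos hzp).le (im_sqrt_pos hzp).le (by positivity)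
    (norm_sqrt_sub_sqrt_le hzm (by simpa using hw) hm)
    (norm_sqrt_sub_sqrt_le hzp (by simpa using hw) hp) using 2
  ring

theorem charC_eq (z : ℂ) (t : ℝ) :
    charC z t = (Real.cosh (t / 2) : ℂ) * z + (Real.sinh (t / 2) : ℂ) * sqrtD z := by
  rw [charC, Real.cosh_eq, Real.sinh_eq, neg_div]
  push_cast
  ring

theorem im_charC (z : ℂ) (t : ℝ) :
    (charC z t).im = Real.cosh (t / 2) * z.im + Real.sinh (t / 2) * (sqrtD z).im := by
  rw [charC_eq, add_im, im_ofReal_mul, im_ofReal_mul]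

theorem im_charC_pos {z : ℂ} (hz : 0 < z.im) {t : ℝ} (ht : 0 ≤ t) : 0 < (charC z t).im := by
  have := Real.sinh_nonneg_iff.2 (by positivity : 0 ≤ t / 2)
  have := im_sqrtD_pos hz
  rw [im_charC]
  positivity

theorem sqrtD_charC {z : ℂ} (hz : 0 < z.im) {t : ℝ} (ht : 0 ≤ t) :
    sqrtD (charC z t) = (Real.sinh (t / 2) : ℂ) * z + (Real.cosh (t / 2) : ℂ) * sqrtD z := by
  have hsinh := Real.sinh_nonneg_iff.2 (by positivity : 0 ≤ t / 2)
  have hcosh := (Real.cosh_pos (t / 2)).le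
  refine sqrtD_eq_of_sq_eq (im_charC_pos hz ht) ?_ ?_
  · have hpyth : (Real.cosh (t / 2) : ℂ) ^ 2 - (Real.sinh (t / 2) : ℂ) ^ 2 = 1 := by
      exact_mod_cast Real.cosh_sq_sub_sinh_sq (t / 2)
    rw [charC_eq]
    linear_combination (↑(Real.cosh (t / 2)) ^ 2 - ↑(Real.sinh (t / 2)) ^ 2) * sqrtD_sq z
      - 4 * hpyth
  · rw [add_im, im_ofReal_mul, im_ofReal_mul]
    have := im_sqrtD_pos hz
    positivity

theorem norm_charC_sub_le {z w : ℂ} {ε : ℝ} (hz : 0 < z.im) (hε₀ : 0 ≤ ε) (hε₁ : ε < 1)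
    (h : ‖w - z‖ ≤ ε * z.im) {t : ℝ} (ht : 0 ≤ t) :
    ‖charC w t - charC z t‖ ≤ 4 * ε * (1 + ε) * (charC z t).im := by
  have hsinh := Real.sinh_nonneg_iff.2 (by positivity : 0 ≤ t / 2)
  have hcosh := (Real.cosh_pos (t / 2)).le
  have hs := norm_sqrtD_sub_le hz hε₀ hε₁ h
  have hdiff : charC w t - charC z t =
      (Real.cosh (t / 2) : ℂ) * (w - z) + (Real.sinh (t / 2) : ℂ) * (sqrtD w - sqrtD z) := by
    rw [charC_eq, charC_eq]
    ring
  rw [hdiff, im_charC]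
  refine (norm_add_le _ _).trans ?_
  rw [norm_mul, norm_mul, Complex.norm_of_nonneg hcosh, Complex.norm_of_nonneg hsinh]
  have : ε * z.im ≤ 4 * ε * (1 + ε) * z.im := mul_le_mul_of_nonneg_right (by nlinarith) hz.le
  nlinarith [mul_le_mul_of_nonneg_left (h.trans this) hcosh, mul_le_mul_of_nonneg_left hs hsinh]

theorem exp_mul_im_mul_im_sqrtD_le {z : ℂ} (hz : 0 < z.im) {t : ℝ} (ht : 0 ≤ t) :
    Real.exp t * z.im * (sqrtD z).im ≤ (charC z t).im * (sqrtD (charC z t)).im := by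
  have hsinh := Real.sinh_nonneg_iff.2 (by positivity : 0 ≤ t / 2)
  have hcosh := (Real.cosh_pos (t / 2)).le
  have hexp : Real.exp t = (Real.cosh (t / 2) + Real.sinh (t / 2)) ^ 2 := by
    rw [Real.cosh_add_sinh, ← Real.exp_nat_mul]
    ring_nf
  rw [sqrtD_charC hz ht, add_im, im_ofReal_mul, im_ofReal_mul, im_charC, hexp]
  nlinarith [mul_nonneg (mul_nonneg hcosh hsinh) (sq_nonneg (z.im - (sqrtD z).im))]

theorem inv_two_mul_le_and_le_two_mul_of_abs_sub_le {a b δ : ℝ} (ha : 0 ≤ a) (hδ : δ ≤ 1 / 2)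
    (h : |b - a| ≤ δ * a) : 2⁻¹ * b ≤ a ∧ a ≤ 2 * b := by
  rw [abs_le] at h
  constructor <;> nlinarith

/-- Stability of quantities along characteristic curves under small perturbations. -/
theorem characteristic_curve_perturbation_stability :
    (∃ c : ℝ, 0 < c ∧ ∀ z w : ℂ, 0 < z.im → ‖w - z‖ ≤ z.im / 100 →
      ∀ t : ℝ, 0 ≤ t →
        -- (i)
        (c⁻¹ * (sqrtD w).im ≤ (sqrtD z).im ∧ (sqrtD z).im ≤ c * (sqrtD w).im) ∧
        -- (ii)
        (c⁻¹ * (charC w t).im ≤ (charC z t).im ∧ (charC z t).im ≤ c * (charC w t).im) ∧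
        -- (iii)
        (∀ y : ℂ, y.im ≤ 0 →
          c⁻¹ * ‖charC w t - y‖ ≤ ‖charC z t - y‖ ∧
          ‖charC z t - y‖ ≤ c * ‖charC w t - y‖)) ∧
    -- monotonicity of η_t · Im √(z_t² − 4)
    (∀ z : ℂ, 0 < z.im → ∀ t : ℝ, 0 ≤ t →
      Real.exp t * z.im * (sqrtD z).im ≤ (charC z t).im * (sqrtD (charC z t)).im) := by
  refine ⟨⟨2, two_pos, fun z w hz hw t ht ↦ ?_⟩, fun z hz t ht ↦ exp_mul_im_mul_im_sqrtD_le hz ht⟩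
  have hε : ‖w - z‖ ≤ 100⁻¹ * z.im := by rwa [inv_mul_eq_div]
  have hδ : 4 * 100⁻¹ * (1 + 100⁻¹) ≤ (1 / 2 : ℝ) := by norm_num
  have hs := norm_sqrtD_sub_le hz (by norm_num) (by norm_num) hε
  have hc := norm_charC_sub_le hz (by norm_num) (by norm_num) hε ht
  have hzt := im_charC_pos hz ht
  refine ⟨?_, ?_, fun y hy ↦ ?_⟩
  · refine inv_two_mul_le_and_le_two_mul_of_abs_sub_le (im_sqrtD_pos hz).le hδ ?_
    exact (sub_im _ _ ▸ abs_im_le_norm _).trans hs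
  · refine inv_two_mul_le_and_le_two_mul_of_abs_sub_le hzt.le hδ ?_
    exact (sub_im _ _ ▸ abs_im_le_norm _).trans hc
  · have hy' : (charC z t).im ≤ ‖charC z t - y‖ :=
      (le_sub_self_iff _ |>.2 hy).trans (sub_im _ _ ▸ im_le_norm _)
    refine inv_two_mul_le_and_le_two_mul_of_abs_sub_le (norm_nonneg _) hδ ?_
    calc |‖charC w t - y‖ - ‖charC z t - y‖| ≤ ‖charC w t - charC z t‖ := by
          simpa using abs_norm_sub_norm_le (charC w t - y) (charC z t - y)
      _ ≤ 4 * 100⁻¹ * (1 + 100⁻¹) * ‖charC z t - y‖ := hc.trans (by gcongr)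

end
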